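/- Let H and K be complex Hilbert spaces whose Hilbert dimensions are both at least 2, and let e₁, e₂ be collinear rank-one partial isometries in B(H,K). Then there exists a rank-one partial isometry u ∈ B(H,K) such that u is orthogonal to e₁ (e₁∘u* = 0 and u*∘e₁ = 0) and u is collinear with e₂. -/

import Mathlib

/-!
A rank-one partial isometry is `rankOne ℂ x y = ⟪y, ·⟫ x` with unit vectors `x ∈ K`, `y ∈ H`.
For two such operators the first collinearity identity reads
`⟪x₁, x₂⟫ rankOne x₁ y₂ + ⟪y₂, y₁⟫ rankOne x₂ y₁ = rankOne x₂ y₂`; evaluated at `y₁` it forces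
`⟪x₁, x₂⟫ ⟪y₂, y₁⟫ = 0`, and then either `y₁ ⊥ y₂` and `x₂ ∈ ℂ x₁`, or `x₁ ⊥ x₂` and
`y₂ ∈ ℂ y₁`. In the first case `u = rankOne ℂ z y₂` with a unit vector `z ⊥ x₁` works, in the
second `u = rankOne ℂ x₂ z` with a unit vector `z ⊥ y₁`; such `z` exist because both spaces have
dimension at least two.
-/

noncomputable section

/-- A partial isometry between Hilbert spaces: `e ∘ e* ∘ e = e`. -/
def IsPartialIsom {H K : Type*}
    [NormedAddCommGroup H] [InnerProductSpace ℂ H] [CompleteSpace H]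
    [NormedAddCommGroup K] [InnerProductSpace ℂ K] [CompleteSpace K]
    (e : H →L[ℂ] K) : Prop :=
  e.comp ((ContinuousLinearMap.adjoint e).comp e) = e

/-- Two operators `a, b` are orthogonal: `a ∘ b* = 0` and `b* ∘ a = 0`. -/
def OrthogonalOps {H K : Type*}
    [NormedAddCommGroup H] [InnerProductSpace ℂ H] [CompleteSpace H]
    [NormedAddCommGroup K] [InnerProductSpace ℂ K] [CompleteSpace K]
    (a b : H →L[ℂ] K) : Prop :=
  a.comp (ContinuousLinearMap.adjoint b) = 0 ∧ (ContinuousLinearMap.adjoint b).comp a = 0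

/-- Two rank-one partial isometries `a, b` are collinear:
`a∘a*∘b + b∘a*∘a = b` and `b∘b*∘a + a∘b*∘b = a`. -/
def CollinearOps {H K : Type*}
    [NormedAddCommGroup H] [InnerProductSpace ℂ H] [CompleteSpace H]
    [NormedAddCommGroup K] [InnerProductSpace ℂ K] [CompleteSpace K]
    (a b : H →L[ℂ] K) : Prop :=
  a.comp ((ContinuousLinearMap.adjoint a).comp b) +
      b.comp ((ContinuousLinearMap.adjoint a).comp a) = b ∧
    b.comp ((ContinuousLinearMap.adjoint b).comp a) +
      a.comp ((ContinuousLinearMap.adjoint b).comp b) = a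

open ContinuousLinearMap InnerProductSpace Module
open scoped InnerProductSpace

section RCLike

variable {𝕜 E F : Type*} [RCLike 𝕜]
  [NormedAddCommGroup E] [InnerProductSpace 𝕜 E]
  [NormedAddCommGroup F] [InnerProductSpace 𝕜 F]

theorem exists_norm_eq_one_inner_eq_zero (hE : ∃ v : Fin 2 → E, Orthonormal 𝕜 v) (x : E) :
    ∃ z : E, ‖z‖ = 1 ∧ ⟪x, z⟫_𝕜 = 0 := by
  obtain ⟨v, hv⟩ := hE
  by_cases hx₀ : ⟪x, v 0⟫_𝕜 = 0
  · exact ⟨v 0, hv.1 0, hx₀⟩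
  set z := ⟪x, v 0⟫_𝕜 • v 1 - ⟪x, v 1⟫_𝕜 • v 0
  have hz : z ≠ 0 := by
    intro hz
    have h := congrArg (⟪v 1, ·⟫_𝕜) hz
    simp only [z, inner_sub_right, inner_smul_right, orthonormal_iff_ite.mp hv] at h
    simp [hx₀] at h
  refine ⟨(‖z‖⁻¹ : 𝕜) • z, norm_smul_inv_norm hz, ?_⟩
  simp only [z, inner_smul_right, inner_sub_right]
  ring

theorem finrank_range_rankOne {x : F} {y : E} (hx : x ≠ 0) (hy : y ≠ 0) :
    finrank 𝕜 (LinearMap.range (rankOne 𝕜 x y : E →ₗ[𝕜] F)) = 1 :=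
  finrank_eq_of_rank_eq (rank_rankOne hx hy)

theorem exists_eq_rankOne_of_finrank_range_eq_one [CompleteSpace E] [CompleteSpace F]
    {e : E →L[𝕜] F} (he : finrank 𝕜 (LinearMap.range (e : E →ₗ[𝕜] F)) = 1) :
    ∃ (x : F) (y : E), ‖x‖ = 1 ∧ e = rankOne 𝕜 x y := by
  obtain ⟨⟨w, hw⟩, hw₀, hspan⟩ := finrank_eq_one_iff'.mp he
  have hw₀ : w ≠ 0 := by simpa using hw₀
  set x : F := (‖w‖⁻¹ : 𝕜) • w
  have hx : ‖x‖ = 1 := norm_smul_inv_norm hw₀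
  have hwx : w = (‖w‖ : 𝕜) • x := by simp [x, smul_smul, hw₀]
  -- `e h` lies on the line through the unit vector `x`, so `e h = ⟪x, e h⟫ x = ⟪e† x, h⟫ x`.
  refine ⟨x, adjoint e x, hx, ?_⟩
  ext h
  obtain ⟨c, hcw⟩ := hspan ⟨e h, h, rfl⟩
  have hc : e h = (c * ‖w‖) • x := by
    rw [mul_smul, ← hwx]
    simpa using (congrArg Subtype.val hcw).symm
  rw [rankOne_apply, adjoint_inner_left, hc, inner_smul_right, inner_self_eq_norm_sq_to_K, hx]
  simp

end RCLike

section Complex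

variable {H K : Type*}
  [NormedAddCommGroup H] [InnerProductSpace ℂ H] [CompleteSpace H]
  [NormedAddCommGroup K] [InnerProductSpace ℂ K] [CompleteSpace K]

theorem rankOne_comp_adjoint_comp_rankOne (x : K) (y : H) :
    rankOne ℂ x y ∘L adjoint (rankOne ℂ x y) ∘L rankOne ℂ x y =
      ((‖x‖ * ‖y‖) ^ 2 : ℂ) • rankOne ℂ x y := by
  simp only [adjoint_rankOne, rankOne_comp_rankOne, comp_smul, smul_smul,
    inner_self_eq_norm_sq_to_K, Complex.coe_algebraMap]
  ring_nf

theorem isPartialIsom_rankOne_iff {x : K} {y : H} (hx : x ≠ 0) (hy : y ≠ 0) :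
    IsPartialIsom (rankOne ℂ x y) ↔ ‖x‖ * ‖y‖ = 1 := by
  rw [IsPartialIsom, rankOne_comp_adjoint_comp_rankOne]
  conv_lhs => rhs; rw [← one_smul ℂ (rankOne ℂ x y)]
  rw [(smul_left_injective ℂ (rankOne_ne_zero hx hy)).eq_iff]
  norm_cast
  exact pow_eq_one_iff_of_nonneg (by positivity) two_ne_zero

theorem isPartialIsom_rankOne_and_finrank_range {x : K} {y : H} (hx : ‖x‖ = 1) (hy : ‖y‖ = 1) :
    IsPartialIsom (rankOne ℂ x y) ∧
      finrank ℂ (LinearMap.range (rankOne ℂ x y : H →ₗ[ℂ] K)) = 1 := by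
  have hx₀ : x ≠ 0 := ne_zero_of_norm_ne_zero (by simp [hx])
  have hy₀ : y ≠ 0 := ne_zero_of_norm_ne_zero (by simp [hy])
  exact ⟨(isPartialIsom_rankOne_iff hx₀ hy₀).mpr (by simp [hx, hy]),
    finrank_range_rankOne hx₀ hy₀⟩

theorem IsPartialIsom.exists_eq_rankOne {e : H →L[ℂ] K} (he : IsPartialIsom e)
    (hr : finrank ℂ (LinearMap.range (e : H →ₗ[ℂ] K)) = 1) :
    ∃ (x : K) (y : H), ‖x‖ = 1 ∧ ‖y‖ = 1 ∧ e = rankOne ℂ x y := by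
  obtain ⟨x, y, hx, rfl⟩ := exists_eq_rankOne_of_finrank_range_eq_one hr
  have hy : y ≠ 0 := by
    rintro rfl
    rw [map_zero, ContinuousLinearMap.toLinearMap_zero, LinearMap.range_zero, finrank_bot] at hr
    exact zero_ne_one hr
  have hxy := (isPartialIsom_rankOne_iff (ne_zero_of_norm_ne_zero (by simp [hx])) hy).mp he
  exact ⟨x, y, hx, by simpa [hx] using hxy, rfl⟩

theorem orthogonalOps_rankOne {x₁ x₂ : K} {y₁ y₂ : H} (hx : ⟪x₂, x₁⟫_ℂ = 0)
    (hy : ⟪y₁, y₂⟫_ℂ = 0) : OrthogonalOps (rankOne ℂ x₁ y₁) (rankOne ℂ x₂ y₂) := by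
  unfold OrthogonalOps
  rw [adjoint_rankOne, rankOne_comp_rankOne, rankOne_comp_rankOne, hx, hy]
  simp

theorem collinearOps_rankOne_of_inner_left_eq_zero {x₁ x₂ : K} {y : H} (hx₁ : ‖x₁‖ = 1)
    (hx₂ : ‖x₂‖ = 1) (hy : ‖y‖ = 1) (hx : ⟪x₁, x₂⟫_ℂ = 0) :
    CollinearOps (rankOne ℂ x₁ y) (rankOne ℂ x₂ y) := by
  simp [CollinearOps, rankOne_comp_rankOne, inner_self_eq_norm_sq_to_K, hx₁, hx₂, hy, hx,
    inner_eq_zero_symm.mp hx]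

theorem collinearOps_rankOne_of_inner_right_eq_zero {x : K} {y₁ y₂ : H} (hx : ‖x‖ = 1)
    (hy₁ : ‖y₁‖ = 1) (hy₂ : ‖y₂‖ = 1) (hy : ⟪y₁, y₂⟫_ℂ = 0) :
    CollinearOps (rankOne ℂ x y₁) (rankOne ℂ x y₂) := by
  simp [CollinearOps, rankOne_comp_rankOne, inner_self_eq_norm_sq_to_K, hx, hy₁, hy₂, hy,
    inner_eq_zero_symm.mp hy]

theorem CollinearOps.smul_rankOne_add_smul_rankOne {x₁ x₂ : K} {y₁ y₂ : H} (hx₁ : ‖x₁‖ = 1)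
    (hy₁ : ‖y₁‖ = 1) (h : CollinearOps (rankOne ℂ x₁ y₁) (rankOne ℂ x₂ y₂)) :
    ⟪x₁, x₂⟫_ℂ • rankOne ℂ x₁ y₂ + ⟪y₂, y₁⟫_ℂ • rankOne ℂ x₂ y₁ = rankOne ℂ x₂ y₂ := by
  simpa [rankOne_comp_rankOne, inner_self_eq_norm_sq_to_K, hx₁, hy₁] using h.1

theorem CollinearOps.rankOne_cases {x₁ x₂ : K} {y₁ y₂ : H} (hx₁ : ‖x₁‖ = 1) (hy₁ : ‖y₁‖ = 1)
    (hx₂ : x₂ ≠ 0) (hy₂ : y₂ ≠ 0) (h : CollinearOps (rankOne ℂ x₁ y₁) (rankOne ℂ x₂ y₂)) :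
    (⟪y₁, y₂⟫_ℂ = 0 ∧ x₂ = ⟪x₁, x₂⟫_ℂ • x₁) ∨ (⟪x₁, x₂⟫_ℂ = 0 ∧ y₂ = ⟪y₁, y₂⟫_ℂ • y₁) := by
  have key := h.smul_rankOne_add_smul_rankOne hx₁ hy₁
  have hx₁₀ : x₁ ≠ 0 := ne_zero_of_norm_ne_zero (by simp [hx₁])
  have hdich : ⟪x₁, x₂⟫_ℂ = 0 ∨ ⟪y₂, y₁⟫_ℂ = 0 := by
    simpa [inner_self_eq_norm_sq_to_K, hy₁, smul_smul, hx₁₀] using congr($key y₁)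
  rcases hdich with hx | hy
  · right
    have hzero : rankOne ℂ x₂ (⟪y₁, y₂⟫_ℂ • y₁ - y₂) = 0 := by
      rw [map_sub, map_smulₛₗ, inner_conj_symm, ← key, hx]
      simp
    rw [rankOne_eq_zero, sub_eq_zero] at hzero
    exact ⟨hx, (hzero.resolve_left hx₂).symm⟩
  · left
    have hzero : rankOne ℂ (⟪x₁, x₂⟫_ℂ • x₁ - x₂) y₂ = 0 := by
      rw [map_sub, map_smul, sub_apply, smul_apply, ← key, hy]
      simp
    rw [rankOne_eq_zero, sub_eq_zero] at hzero
    exact ⟨inner_eq_zero_symm.mp hy, (hzero.resolve_right hy₂).symm⟩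

end Complex

/-- Given two collinear rank-one partial isometries `e₁ ⊤ e₂` in `B(H,K)` with
`dim H, dim K ≥ 2`, there is a rank-one partial isometry `u` orthogonal to `e₁` and
collinear with `e₂`. -/
theorem exists_orthogonal_collinear_partialIsometry
    {H K : Type*}
    [NormedAddCommGroup H] [InnerProductSpace ℂ H] [CompleteSpace H]
    [NormedAddCommGroup K] [InnerProductSpace ℂ K] [CompleteSpace K]
    (hdimH : ∃ v : Fin 2 → H, Orthonormal ℂ v)
    (hdimK : ∃ w : Fin 2 → K, Orthonormal ℂ w)
    (e₁ e₂ : H →L[ℂ] K)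
    (h₁ : IsPartialIsom e₁) (h₂ : IsPartialIsom e₂)
    (hr₁ : Module.finrank ℂ (LinearMap.range (e₁ : H →ₗ[ℂ] K)) = 1)
    (hr₂ : Module.finrank ℂ (LinearMap.range (e₂ : H →ₗ[ℂ] K)) = 1)
    (hcol : CollinearOps e₁ e₂) :
    ∃ u : H →L[ℂ] K, IsPartialIsom u ∧ Module.finrank ℂ (LinearMap.range (u : H →ₗ[ℂ] K)) = 1 ∧
      OrthogonalOps e₁ u ∧ CollinearOps u e₂ := by
  obtain ⟨x₁, y₁, hx₁, hy₁, rfl⟩ := h₁.exists_eq_rankOne hr₁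
  obtain ⟨x₂, y₂, hx₂, hy₂, rfl⟩ := h₂.exists_eq_rankOne hr₂
  rcases hcol.rankOne_cases hx₁ hy₁ (ne_zero_of_norm_ne_zero (by simp [hx₂]))
    (ne_zero_of_norm_ne_zero (by simp [hy₂])) with ⟨hy, hx⟩ | ⟨hx, hy⟩
  · obtain ⟨z, hz, hx₁z⟩ := exists_norm_eq_one_inner_eq_zero hdimK x₁
    have hzx₁ : ⟪z, x₁⟫_ℂ = 0 := inner_eq_zero_symm.mp hx₁z
    have hzx₂ : ⟪z, x₂⟫_ℂ = 0 := by rw [hx, inner_smul_right, hzx₁, mul_zero]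
    exact ⟨rankOne ℂ z y₂, (isPartialIsom_rankOne_and_finrank_range hz hy₂).1,
      (isPartialIsom_rankOne_and_finrank_range hz hy₂).2, orthogonalOps_rankOne hzx₁ hy,
      collinearOps_rankOne_of_inner_left_eq_zero hz hx₂ hy₂ hzx₂⟩
  · obtain ⟨z, hz, hy₁z⟩ := exists_norm_eq_one_inner_eq_zero hdimH y₁
    have hzy₂ : ⟪z, y₂⟫_ℂ = 0 := by
      rw [hy, inner_smul_right, inner_eq_zero_symm.mp hy₁z, mul_zero]
    exact ⟨rankOne ℂ x₂ z, (isPartialIsom_rankOne_and_finrank_range hx₂ hz).1,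
      (isPartialIsom_rankOne_and_finrank_range hx₂ hz).2,
      orthogonalOps_rankOne (inner_eq_zero_symm.mp hx) hy₁z,
      collinearOps_rankOne_of_inner_right_eq_zero hx₂ hz hy₂ hzy₂⟩
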